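/- Consider a spatial spectrum access game on an arbitrary undirected interference graph with homogeneous channels (θ_m = θ ∈ (0,1) and B_m = B > 0 for all channels m), user-specific transmission gains h_n > 0, and the random backoff mechanism, so that player n's payoff under profile a is U_n(a) = h_n·θ·B·f(K_n^{a_n}(a)), where K_n^m(a) = |{i ∈ 𝒩_n : a_i = m}|. Then Φ(a) = −Σ_{n=1}^N (1 + K_n^{a_n}(a)) / (θ·B) is an ordinal potential for the game, and consequently the game has a pure Nash equilibrium. -/

import Mathlib

/-!
When player `n` moves from `aₙ` to `m`, only the counts of `n` and of its neighbours change.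
As the interference graph is symmetric and loop-free, `∑ⱼ Kⱼ^{aⱼ}(a)` counts ordered conflicting
pairs, and the pairs through `n` contribute `2 Kₙ^{aₙ}(a)`. Hence `Φ` moves by
`2 (Kₙ^{aₙ}(a) − Kₙ^m(a)) / (θB)`, while `Uₙ` moves by `hₙθB (f(Kₙ^m(a)) − f(Kₙ^{aₙ}(a)))`, which
has the same sign because `f` is strictly decreasing. A maximiser of `Φ` over the finitely many
profiles is then a Nash equilibrium.
-/

open Finset Function

section GameTheory

variable {ι α : Type*} [DecidableEq ι]

def IsOrdinalPotential (U : (ι → α) → ι → ℝ) (Φ : (ι → α) → ℝ) : Prop :=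
  ∀ (n : ι) (a : ι → α) (m : α),
    Real.sign (Φ (update a n m) - Φ a) = Real.sign (U (update a n m) n - U a n)

def IsNashEquilibrium (U : (ι → α) → ι → ℝ) (a : ι → α) : Prop :=
  ∀ (n : ι) (m : α), U (update a n m) n ≤ U a n

theorem IsOrdinalPotential.exists_isNashEquilibrium [Finite ι] [Finite α] [Nonempty α]
    {U : (ι → α) → ι → ℝ} {Φ : (ι → α) → ℝ} (hΦ : IsOrdinalPotential U Φ) :
    ∃ a, IsNashEquilibrium U a := by
  obtain ⟨a, ha⟩ := Finite.exists_max Φ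
  refine ⟨a, fun n m => not_lt.1 fun hgain => ?_⟩
  have hsign := hΦ n a m
  rw [Real.sign_of_pos (sub_pos.2 hgain)] at hsign
  rcases (sub_nonpos.2 (ha (update a n m))).lt_or_eq with hdrop | hsame
  · rw [Real.sign_of_neg hdrop] at hsign
    norm_num at hsign
  · rw [hsame, Real.sign_zero] at hsign
    norm_num at hsign

end GameTheory

theorem Real.sign_mul_sub_eq_sign_mul_sub_of_strictAnti {f : ℕ → ℝ} (hf : StrictAnti f)
    {c d : ℝ} (hc : 0 < c) (hd : 0 < d) (x y : ℕ) :
    Real.sign (c * ((x : ℝ) - y)) = Real.sign (d * (f y - f x)) := by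
  rcases lt_trichotomy x y with hxy | rfl | hxy
  · have hxy' : (x : ℝ) < y := by exact_mod_cast hxy
    rw [Real.sign_of_neg (mul_neg_of_pos_of_neg hc (by linarith)),
      Real.sign_of_neg (mul_neg_of_pos_of_neg hd (by linarith [hf hxy]))]
  · simp
  · have hxy' : (y : ℝ) < x := by exact_mod_cast hxy
    rw [Real.sign_of_pos (mul_pos hc (by linarith)),
      Real.sign_of_pos (mul_pos hd (by linarith [hf hxy]))]

theorem strictAnti_sum_mul_pow {κ : Type*} {s : Finset κ} {w r : κ → ℝ}
    (hw : ∀ i ∈ s, 0 ≤ w i) (hr₀ : ∀ i ∈ s, 0 ≤ r i) (hr₁ : ∀ i ∈ s, r i ≤ 1)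
    {i₀ : κ} (hi₀ : i₀ ∈ s) (hw₀ : 0 < w i₀) (hr₀' : 0 < r i₀) (hr₁' : r i₀ < 1) :
    StrictAnti fun c : ℕ => ∑ i ∈ s, w i * r i ^ c := by
  refine strictAnti_nat_of_succ_lt fun c => Finset.sum_lt_sum (fun i hi => ?_) ⟨i₀, hi₀, ?_⟩
  · exact mul_le_mul_of_nonneg_left (pow_le_pow_of_le_one (hr₀ i hi) (hr₁ i hi) c.le_succ)
      (hw i hi)
  · exact mul_lt_mul_of_pos_left (pow_lt_pow_right_of_lt_one₀ hr₀' hr₁' c.lt_succ_self) hw₀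

noncomputable def backoffProb (lmax c : ℕ) : ℝ :=
  ∑ l ∈ Icc 1 lmax, (1 / (lmax : ℝ)) * (((lmax : ℝ) - (l : ℝ)) / (lmax : ℝ)) ^ c

theorem backoffProb_strictAnti {lmax : ℕ} (hl : 2 ≤ lmax) : StrictAnti (backoffProb lmax) := by
  have hlmax : (2 : ℝ) ≤ lmax := by exact_mod_cast hl
  refine strictAnti_sum_mul_pow (i₀ := 1) (fun _ _ => by positivity) (fun l hl' => ?_)
    (fun l hl' => ?_) (by simp; omega) (by positivity) ?_ ?_
  · have : (l : ℝ) ≤ lmax := by exact_mod_cast (mem_Icc.1 hl').2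
    exact div_nonneg (by linarith) (by linarith)
  · have : (1 : ℝ) ≤ l := by exact_mod_cast (mem_Icc.1 hl').1
    rw [div_le_one (by linarith)]
    linarith
  · exact div_pos (by push_cast; linarith) (by linarith)
  · rw [div_lt_one (by linarith)]
    push_cast
    linarith

theorem Finset.sum_sum_eq_sum_sum_erase_add_two_nsmul {ι M : Type*} [Fintype ι] [DecidableEq ι]
    [AddCommMonoid M] (g : ι → ι → M) (hg : ∀ i j, g i j = g j i) (n : ι) (hn : g n n = 0) :
    ∑ j, ∑ i, g i j = ∑ j ∈ univ.erase n, ∑ i ∈ univ.erase n, g i j + 2 • ∑ i, g i n := by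
  have hcol : ∑ i ∈ univ.erase n, g i n = ∑ i, g i n := by
    rw [← add_sum_erase _ _ (mem_univ n), hn, zero_add]
  calc ∑ j, ∑ i, g i j = ∑ j, (g n j + ∑ i ∈ univ.erase n, g i j) :=
        sum_congr rfl fun j _ => (add_sum_erase _ _ (mem_univ n)).symm
    _ = ∑ i, g i n +
          (∑ i ∈ univ.erase n, g i n + ∑ j ∈ univ.erase n, ∑ i ∈ univ.erase n, g i j) := by
        rw [sum_add_distrib,
          ← add_sum_erase _ (fun j => ∑ i ∈ univ.erase n, g i j) (mem_univ n)]
        simp_rw [hg n]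
    _ = _ := by rw [hcol, two_nsmul]; abel

section Interference

variable {ι α : Type*} [DecidableEq ι] [DecidableEq α]

def interferenceCount (𝒩 : ι → Finset ι) (n : ι) (m : α) (a : ι → α) : ℕ :=
  ((𝒩 n).filter (fun i => a i = m)).card

variable {𝒩 : ι → Finset ι}

theorem interferenceCount_eq_sum [Fintype ι] (n : ι) (m : α) (a : ι → α) :
    interferenceCount 𝒩 n m a = ∑ i, if i ∈ 𝒩 n ∧ a i = m then 1 else 0 := by
  rw [sum_boole, ← filter_filter, filter_mem_eq_inter, univ_inter]
  rfl

theorem interferenceCount_update_self {n : ι} (hn : n ∉ 𝒩 n) (c m : α) (a : ι → α) :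
    interferenceCount 𝒩 n c (update a n m) = interferenceCount 𝒩 n c a := by
  unfold interferenceCount
  congr 1
  exact filter_congr fun i hi => by rw [update_of_ne (ne_of_mem_of_not_mem hi hn)]

theorem sum_interferenceCount_update_add [Fintype ι] (hself : ∀ n, n ∉ 𝒩 n)
    (hsym : ∀ i j, i ∈ 𝒩 j ↔ j ∈ 𝒩 i) (a : ι → α) (n : ι) (m : α) :
    ∑ j, interferenceCount 𝒩 j (update a n m j) (update a n m) +
        2 * interferenceCount 𝒩 n (a n) a =
      ∑ j, interferenceCount 𝒩 j (a j) a + 2 * interferenceCount 𝒩 n m a := by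
  let conflict (b : ι → α) (i j : ι) : ℕ := if i ∈ 𝒩 j ∧ b i = b j then 1 else 0
  have hsplit (b : ι → α) : ∑ j, interferenceCount 𝒩 j (b j) b =
      ∑ j ∈ univ.erase n, ∑ i ∈ univ.erase n, conflict b i j +
        2 * interferenceCount 𝒩 n (b n) b := by
    simp_rw [interferenceCount_eq_sum, ← smul_eq_mul]
    refine sum_sum_eq_sum_sum_erase_add_two_nsmul (conflict b) (fun i j => ?_) n
      (by simp [conflict, hself])
    simp only [conflict, hsym i j, eq_comm]
  have hrest : ∑ j ∈ univ.erase n, ∑ i ∈ univ.erase n, conflict (update a n m) i j =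
      ∑ j ∈ univ.erase n, ∑ i ∈ univ.erase n, conflict a i j :=
    sum_congr rfl fun j hj => sum_congr rfl fun i hi => by
      simp only [conflict, update_of_ne (ne_of_mem_erase hj), update_of_ne (ne_of_mem_erase hi)]
  rw [hsplit (update a n m), hsplit a, hrest, update_self,
    interferenceCount_update_self (hself n)]
  ring

noncomputable def congestionPotential [Fintype ι] (𝒩 : ι → Finset ι) (c : ℝ) (a : ι → α) : ℝ :=
  -∑ n, (1 + (interferenceCount 𝒩 n (a n) a : ℝ)) / c

theorem congestionPotential_update_sub [Fintype ι] (hself : ∀ n, n ∉ 𝒩 n)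
    (hsym : ∀ i j, i ∈ 𝒩 j ↔ j ∈ 𝒩 i) (c : ℝ) (a : ι → α) (n : ι) (m : α) :
    congestionPotential 𝒩 c (update a n m) - congestionPotential 𝒩 c a =
      2 / c * ((interferenceCount 𝒩 n (a n) a : ℝ) - interferenceCount 𝒩 n m a) := by
  have hsum := congrArg (Nat.cast : ℕ → ℝ) (sum_interferenceCount_update_add hself hsym a n m)
  push_cast at hsum
  simp only [congestionPotential, ← sum_div, sum_add_distrib]
  rw [eq_sub_of_add_eq hsum]
  ring

end Interference

/-- Random backoff spatial spectrum access game with homogeneous channels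
(`θ_m = θ`, `B_m = B`) and user-specific transmission gains on an arbitrary
undirected interference graph: `Φ(a) = −Σₙ (1 + Kₙ^{aₙ}(a))/(θB)` is an ordinal
potential, and the game has a pure Nash equilibrium. -/
theorem stmt_10 (N M lmax : ℕ) (hl : 2 ≤ lmax)
    (𝒩 : Fin (N + 1) → Finset (Fin (N + 1)))
    (hself : ∀ n, n ∉ 𝒩 n)
    -- undirected interference graph:
    (hsym : ∀ i j, i ∈ 𝒩 j ↔ j ∈ 𝒩 i)
    (θ B : ℝ) (hθ : 0 < θ ∧ θ < 1) (hB : 0 < B)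
    (h : Fin (N + 1) → ℝ) (hh : ∀ n, 0 < h n)
    -- random backoff channel grabbing probability with c same-channel interferers:
    (f : ℕ → ℝ)
    (hf : ∀ c, f c = ∑ l ∈ Finset.Icc 1 lmax,
      (1 / (lmax : ℝ)) * (((lmax : ℝ) - (l : ℝ)) / (lmax : ℝ)) ^ c)
    -- number of interferers of player n choosing channel m:
    (K : Fin (N + 1) → Fin (M + 1) → (Fin (N + 1) → Fin (M + 1)) → ℕ)
    (hK : ∀ n m a, K n m a = ((𝒩 n).filter (fun i => a i = m)).card)
    (U : (Fin (N + 1) → Fin (M + 1)) → Fin (N + 1) → ℝ)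
    (hU : ∀ a n, U a n = h n * θ * B * f (K n (a n) a))
    (Φ : (Fin (N + 1) → Fin (M + 1)) → ℝ)
    (hΦ : ∀ a, Φ a = -∑ n, (1 + (K n (a n) a : ℝ)) / (θ * B)) :
    (∀ (n : Fin (N + 1)) (a : Fin (N + 1) → Fin (M + 1)) (m : Fin (M + 1)),
      Real.sign (Φ (Function.update a n m) - Φ a) =
        Real.sign (U (Function.update a n m) n - U a n)) ∧
    ∃ a : Fin (N + 1) → Fin (M + 1), ∀ (n : Fin (N + 1)) (m : Fin (M + 1)),
      U (Function.update a n m) n ≤ U a n := by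
  obtain rfl : f = backoffProb lmax := funext hf
  obtain rfl : K = interferenceCount 𝒩 := by
    funext n m a
    exact hK n m a
  obtain rfl : Φ = congestionPotential 𝒩 (θ * B) := funext hΦ
  have hpot : IsOrdinalPotential U (congestionPotential 𝒩 (θ * B)) := by
    intro n a m
    rw [congestionPotential_update_sub hself hsym, hU, hU, update_self,
      interferenceCount_update_self (hself n), ← mul_sub]
    exact Real.sign_mul_sub_eq_sign_mul_sub_of_strictAnti (backoffProb_strictAnti hl)
      (div_pos two_pos (mul_pos hθ.1 hB)) (mul_pos (mul_pos (hh n) hθ.1) hB) _ _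
  exact ⟨hpot, hpot.exists_isNashEquilibrium⟩
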